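/- arXiv:1910.09333 — 2 statements merged into one kernel-verified Lean document; each statement's English description precedes it below -/
import Mathlib

section
/- Let C_1 and C_2 be binary linear codes of length n such that for every codeword x ∈ C_2 there exists a self-dual code C_x ⊆ C_1^⊥ (with respect to the inner product restricted to supp(x)) supported on supp(x), i.e., C_x is a subspace of C_1^⊥ all of whose elements have support inside supp(x), x ∈ C_x, and the punctured code C̃_x ⊆ F_2^{w(x)} is self-dual. Then C_1 ∗ C_2 ⊆ C_1^⊥, where C_1 ∗ C_2 denotes the linear span of all coordinatewise products a ∗ x for a ∈ C_1, x ∈ C_2. -/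
def inner2 {n : ℕ} (x y : Fin n → ZMod 2) : ZMod 2 := ∑ i, x i * y i

def dualCode {n : ℕ} (C : Submodule (ZMod 2) (Fin n → ZMod 2)) :
    Submodule (ZMod 2) (Fin n → ZMod 2) where
  carrier := {v | ∀ c ∈ C, inner2 v c = 0}
  zero_mem' := by intro c _; simp [inner2]
  add_mem' := by
    intro a b ha hb c hc
    have h : inner2 a c + inner2 b c = 0 := by rw [ha c hc, hb c hc, add_zero]
    simpa [inner2, Pi.add_apply, add_mul, Finset.sum_add_distrib] using h
  smul_mem' := by
    intro r a ha c hc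
    have h : r * inner2 a c = 0 := by rw [ha c hc, mul_zero]
    simpa [inner2, Pi.smul_apply, smul_eq_mul, mul_assoc, Finset.mul_sum] using h


theorem stmt15 {n : ℕ} (C1 C2 : Submodule (ZMod 2) (Fin n → ZMod 2))
    (h : ∀ x ∈ C2, ∃ Cx : Submodule (ZMod 2) (Fin n → ZMod 2),
      Cx ≤ dualCode C1 ∧
      (∀ z ∈ Cx, ∀ i, x i = 0 → z i = 0) ∧
      x ∈ Cx ∧
      (∀ y ∈ Cx, ∀ z ∈ Cx, inner2 y z = 0) ∧
      (∀ v : Fin n → ZMod 2, (∀ i, x i = 0 → v i = 0) →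
        (∀ z ∈ Cx, inner2 v z = 0) → v ∈ Cx)) :
    Submodule.span (ZMod 2)
        {w : Fin n → ZMod 2 | ∃ a ∈ C1, ∃ x ∈ C2, w = fun i => a i * x i}
      ≤ dualCode C1 := by
  rw [Submodule.span_le]
  rintro w ⟨a, ha, x, hx, rfl⟩
  obtain ⟨Cx, hsub, hsupp, -, -, hmax⟩ := h x hx
  apply hsub
  apply hmax
  · intro i hi; simp [hi]
  · intro z hz
    have hz0 : inner2 z a = 0 := hsub hz a ha
    have : inner2 (fun i => a i * x i) z = inner2 a z := by
      unfold inner2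
      apply Finset.sum_congr rfl
      intro i _
      rcases (by decide : ∀ t : ZMod 2, t = 0 ∨ t = 1) (x i) with h0 | h1
      · simp [hsupp z hz i h0, h0]
      · simp [h1]
    rw [this]
    rw [show inner2 a z = inner2 z a from Finset.sum_congr rfl fun i _ => mul_comm _ _, hz0]
end

section
/- Let D be a binary linear code of length n with minimum distance d, and suppose that for a given vector x ∈ F_2^n there is a self-dual code C_x ⊆ D supported on supp(x) with x ∈ C_x. If z ∈ D^⊥ is nonzero with w(z) < d, then for every such x, the projection x ∗ z lies in C_x and hence either x ∗ z = 0 or w(x ∗ z) ≥ d; since w(x ∗ z) ≤ w(z) < d, it follows that x ∗ z = 0, i.e., supp(z) ∩ supp(x) = ∅. -/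
theorem stmt16 {n : ℕ} (D : Submodule (ZMod 2) (Fin n → ZMod 2)) (d : ℕ)
    (hdist : ∀ c ∈ D, c ≠ 0 → d ≤ hammingNorm c)
    (x : Fin n → ZMod 2)
    (Cx : Submodule (ZMod 2) (Fin n → ZMod 2))
    (hCxD : Cx ≤ D)
    (hsupp : ∀ z ∈ Cx, ∀ i, x i = 0 → z i = 0)
    (hxCx : x ∈ Cx)
    (hso : ∀ y ∈ Cx, ∀ z ∈ Cx, inner2 y z = 0)
    (hsd : ∀ v : Fin n → ZMod 2, (∀ i, x i = 0 → v i = 0) →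
      (∀ z ∈ Cx, inner2 v z = 0) → v ∈ Cx)
    (z : Fin n → ZMod 2) (hz : z ∈ dualCode D) (hz0 : z ≠ 0)
    (hzw : hammingNorm z < d) :
    (fun i => x i * z i) ∈ Cx ∧ (fun i => x i * z i) = (0 : Fin n → ZMod 2) := by

  have hmem : (fun i => x i * z i) ∈ Cx := by
    apply hsd
    · intro i hi; simp [hi]
    · intro c hc
      have hzc : inner2 z c = 0 := hz c (hCxD hc)
      have : inner2 (fun i => x i * z i) c = inner2 z c := by
        unfold inner2
        refine Finset.sum_congr rfl fun i _ => ?_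
        by_cases h : c i = 0
        · simp [h]
        · have hx1 : x i = 1 := by
            have h0 : x i ≠ 0 := fun h0 => h (hsupp c hc i h0)
            have hall : ∀ a : ZMod 2, a ≠ 0 → a = 1 := by decide
            exact hall _ h0
          simp [hx1]
      rw [this]; exact hzc
  refine ⟨hmem, ?_⟩
  by_contra hne
  have hle : hammingNorm (fun i => x i * z i) ≤ hammingNorm z := by
    apply Finset.card_le_card
    intro i hi
    simp only [Finset.mem_filter] at *
    exact ⟨hi.1, fun h => hi.2 (by simp [h])⟩
  have := hdist _ (hCxD hmem) hne
  omega
end
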